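/- arXiv:0909.3607 — 4 statements merged into one kernel-verified Lean document; each statement's English description precedes it below -/
import Mathlib

section
/- Let 𝒢 be a compact operator on a Banach space Y and {P_n} a sequence of bounded projections converging pointwise to the identity on Y. Then the family {P_n 𝒢 : n ≥ 1} is collectively compact, i.e. the set {P_n 𝒢 v : ‖v‖ ≤ 1, n ≥ 1} has compact closure in Y. -/
/-!
By Banach–Steinhaus the `P n` are uniformly bounded, hence equicontinuous, so their pointwise
convergence to the identity is uniform on the compact set `K = closure (G '' closedBall 0 1)`.
The restrictions `P n|_K` together with their limit then form a compact subset of `C(K, Y)`,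
and evaluating it on `K` gives a compact set containing every `P n (G v)` with `‖v‖ ≤ 1`.
-/

open Filter Set Topology

theorem ContinuousLinearMap.equicontinuous_of_tendsto {𝕜 E F : Type*}
    [NontriviallyNormedField 𝕜] [NormedAddCommGroup E] [NormedSpace 𝕜 E] [CompleteSpace E]
    [NormedAddCommGroup F] [NormedSpace 𝕜 F] {T : ℕ → E →L[𝕜] F} {g : E → F}
    (h : ∀ x, Tendsto (fun n ↦ T n x) atTop (𝓝 (g x))) : Equicontinuous ((↑) ∘ T) := by
  have hbdd : ∃ C, ∀ n, ‖T n‖ ≤ C := banach_steinhaus fun x ↦ by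
    obtain ⟨C, hC⟩ := (h x).norm.bddAbove_range
    exact ⟨C, fun n ↦ hC (mem_range_self n)⟩
  exact ((NormedSpace.equicontinuous_TFAE T).out 1 5).mpr hbdd

theorem Equicontinuous.tendstoUniformlyOn_of_tendsto {ι X α : Type*} [TopologicalSpace X]
    [UniformSpace α] {F : ι → X → α} {f : X → α} {l : Filter ι} (hF : Equicontinuous F)
    (h : Tendsto F l (𝓝 f)) {K : Set X} (hK : IsCompact K) : TendstoUniformlyOn F f l K := by
  have := isCompact_iff_compactSpace.mp hK
  have hFK : Equicontinuous (K.domRestrict ∘ F) :=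
    (equicontinuous_restrict_iff F).mpr (hF.equicontinuousOn K)
  rw [tendstoUniformlyOn_iff_tendstoUniformly_comp_coe]
  exact UniformFun.tendsto_iff_tendstoUniformly.mp <| (hFK.tendsto_uniformFun_iff_pi l _).mpr
    ((Pi.continuous_domRestrict K).tendsto f |>.comp h)

theorem ContinuousMap.isCompact_biUnion_range {X Y : Type*} [TopologicalSpace X]
    [TopologicalSpace Y] [CompactSpace X] [LocallyCompactPair X Y] {S : Set C(X, Y)}
    (hS : IsCompact S) : IsCompact (⋃ g ∈ S, range g) := by
  convert (hS.prod isCompact_univ).image continuous_eval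
  ext y
  simp [eq_comm]

theorem TendstoUniformlyOn.isCompact_image_union_iUnion_image {X Y : Type*} [TopologicalSpace X]
    [R1Space X] [UniformSpace Y] {K : Set X} (hK : IsCompact K) {F : ℕ → X → Y} {f : X → Y}
    (hF : ∀ n, ContinuousOn (F n) K) (hf : ContinuousOn f K)
    (h : TendstoUniformlyOn F f atTop K) :
    IsCompact (f '' K ∪ ⋃ n, F n '' K) := by
  have := isCompact_iff_compactSpace.mp hK
  have hlim := (hf.tendsto_domRestrict_iff_tendstoUniformlyOn hF).mpr h
  convert ContinuousMap.isCompact_biUnion_range hlim.isCompact_insert_range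
  ext y
  simp [eq_comm]

theorem collectively_compact_family_general
    {Y : Type*} [NormedAddCommGroup Y] [NormedSpace ℝ Y] [CompleteSpace Y]
    (G : Y →L[ℝ] Y) (hG : IsCompactOperator G)
    (P : ℕ → Y →L[ℝ] Y)
    (hptwise : ∀ y : Y, Filter.Tendsto (fun n => P n y) Filter.atTop (nhds y)) :
    IsCompact (closure {y : Y | ∃ (n : ℕ) (v : Y), 1 ≤ n ∧ ‖v‖ ≤ 1 ∧ y = P n (G v)}) := by
  set K := closure (G '' Metric.closedBall 0 1)
  have hK : IsCompact K := hG.isCompact_closure_image_closedBall 1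
  have hunif : TendstoUniformlyOn (fun n ↦ P n) id atTop K :=
    (ContinuousLinearMap.equicontinuous_of_tendsto hptwise).tendstoUniformlyOn_of_tendsto
      (tendsto_pi_nhds.mpr hptwise) hK
  have hL := hunif.isCompact_image_union_iUnion_image hK (fun n ↦ (P n).continuous.continuousOn)
    continuousOn_id
  refine hL.of_isClosed_subset isClosed_closure (closure_minimal ?_ hL.isClosed)
  rintro _ ⟨n, v, -, hv, rfl⟩
  exact Or.inr <|
    mem_iUnion.mpr ⟨n, G v, subset_closure ⟨v, mem_closedBall_zero_iff.mpr hv, rfl⟩, rfl⟩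

/-- If `𝒢` is compact on a Banach space `Y` and `P_n` are bounded projections
converging pointwise to the identity, then `{P_n 𝒢}` is collectively compact: the set
`{P_n 𝒢 v : ‖v‖ ≤ 1, n ≥ 1}` has compact closure in `Y`. -/
theorem collectively_compact_family
    {Y : Type*} [NormedAddCommGroup Y] [NormedSpace ℝ Y] [CompleteSpace Y]
    (G : Y →L[ℝ] Y) (hG : IsCompactOperator G)
    (P : ℕ → Y →L[ℝ] Y)
    (hproj : ∀ n, (P n).comp (P n) = P n)
    (hptwise : ∀ y : Y, Filter.Tendsto (fun n => P n y) Filter.atTop (nhds y)) :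
    IsCompact (closure {y : Y | ∃ (n : ℕ) (v : Y), 1 ≤ n ∧ ‖v‖ ≤ 1 ∧ y = P n (G v)}) :=
  collectively_compact_family_general G hG P hptwise
end

section
/- For each n, the ridge polynomials φ̃_{n,k}(x,y) = (1/√π) U_n(x cos(kh) + y sin(kh)), k = 0,…,n, with h = π/(n+1) and U_n the degree-n Chebyshev polynomial of the second kind, form an orthonormal set in L²(D), where D is the unit disk: ∫_D φ̃_{n,j} φ̃_{n,k} dx dy = δ_{jk}. -/
/-! Rotating the disk by `j h` turns the pair into `U_n(x)` and the ridge function of angle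
`δ = (k - j) h`. Along the vertical chord of the disk through `x = cos a`, the ridge function
`U_n(x cos δ + y sin δ)` has the antiderivative `T_{n+1}(x cos δ + y sin δ) / ((n + 1) sin δ)`,
whose values at the endpoints are `T_{n+1}(cos (a ∓ δ)) = cos ((n + 1)(a ∓ δ))`; hence the chord
integral is `2/(n+1) · √(1 - x²) U_n(x) U_n(cos δ)`, and Fubini reduces the disk integral to
`U_n(cos δ)` times `∫ U_n(x)² √(1 - x²) dx = π/2`. Finally `U_n(cos δ) = sin ((n + 1) δ) / sin δ`
is `n + 1` at `δ = 0` and vanishes at `δ = (k - j) π/(n + 1)` for `0 < |k - j| ≤ n`. -/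

open MeasureTheory Real

/-- The ridge polynomial `φ̃_{n,k}(x,y) = (1/√π) U_n(x cos(kh) + y sin(kh))`, `h = π/(n+1)`,
with `U_n` the Chebyshev polynomial of the second kind. -/
noncomputable def ridgePoly (n k : ℕ) (p : EuclideanSpace ℝ (Fin 2)) : ℝ :=
  (1 / Real.sqrt π) *
    (Polynomial.Chebyshev.U ℝ (n : ℤ)).eval
      (p 0 * Real.cos (k * (π / (n + 1))) + p 1 * Real.sin (k * (π / (n + 1))))

namespace Polynomial.Chebyshev

theorem hasDerivAt_T_eval_succ (n : ℕ) (x : ℝ) :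
    HasDerivAt (fun x => (T ℝ (n + 1)).eval x) ((n + 1) * (U ℝ n).eval x) x := by
  have h := (T ℝ (n + 1)).hasDerivAt x
  rw [T_derivative_eq_U] at h
  simpa using h

theorem U_eval_mul_of_sq_eq_one (n : ℕ) {c : ℝ} (hc : c ^ 2 = 1) (x : ℝ) :
    (n + 1) * (U ℝ n).eval (c * x) = (U ℝ n).eval c * (U ℝ n).eval x := by
  rcases sq_eq_one_iff.mp hc with rfl | rfl
  · simp [U_eval_one]
  · simp only [neg_one_mul, U_eval_neg, U_eval_one, Int.cast_natCast]
    ring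

theorem U_eval_cos_int_mul_pi_div (n : ℕ) {m : ℤ} (hm : ¬ (n + 1 : ℤ) ∣ m) :
    (U ℝ n).eval (cos (m * π / (n + 1))) = 0 := by
  have hn : (n : ℝ) + 1 ≠ 0 := by positivity
  have hsin : sin (m * π / (n + 1)) ≠ 0 := by
    rw [Ne, sin_eq_zero_iff]
    rintro ⟨l, hl⟩
    refine hm ⟨l, ?_⟩
    field_simp at hl
    have hml : (m : ℝ) = ((n + 1 : ℤ) : ℝ) * l := by push_cast; linarith
    exact_mod_cast hml
  have hU := U_real_cos (m * π / (n + 1)) n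
  push_cast at hU
  rw [show ((n : ℝ) + 1) * (m * π / (n + 1)) = m * π by field_simp, sin_int_mul_pi] at hU
  exact (mul_eq_zero.mp hU).resolve_right hsin

theorem U_eval_cos_mul_pi_div_sub (n : ℕ) {j k : ℕ} (hj : j ≤ n) (hk : k ≤ n) :
    (U ℝ n).eval (cos (k * (π / (n + 1)) - j * (π / (n + 1))))
      = if j = k then (n + 1 : ℝ) else 0 := by
  split_ifs with hjk
  · simp [hjk, U_eval_one]
  · have hndvd : ¬ (n + 1 : ℤ) ∣ ((k : ℤ) - j) := fun hdvd => hjk <| by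
      have := Int.eq_zero_of_abs_lt_dvd hdvd (by rw [abs_lt]; constructor <;> omega)
      omega
    convert U_eval_cos_int_mul_pi_div n hndvd using 3
    push_cast
    ring

end Polynomial.Chebyshev

open Polynomial.Chebyshev

theorem integral_U_eval_chord_cos (n : ℕ) (a δ : ℝ) :
    ∫ y in -sin a..sin a, (U ℝ n).eval (cos a * cos δ + y * sin δ)
      = 2 * sin ((n + 1) * a) / (n + 1) * (U ℝ n).eval (cos δ) := by
  have hn : (n : ℝ) + 1 ≠ 0 := by positivity
  have hUa := U_real_cos a n
  push_cast at hUa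
  by_cases hδ : sin δ = 0
  · have hc : cos δ ^ 2 = 1 := by nlinarith [sin_sq_add_cos_sq δ]
    have key := U_eval_mul_of_sq_eq_one n hc (cos a)
    rw [hδ, ← hUa, mul_comm (cos a)]
    simp only [mul_zero, add_zero, intervalIntegral.integral_const, smul_eq_mul]
    field_simp
    linear_combination (2 * sin a) * key
  have hF : ∀ y, HasDerivAt
      (fun y => (T ℝ (n + 1)).eval (cos a * cos δ + y * sin δ) / ((n + 1) * sin δ))
      ((U ℝ n).eval (cos a * cos δ + y * sin δ)) y := by
    intro y
    have hlin : HasDerivAt (fun y => cos a * cos δ + y * sin δ) (sin δ) y := by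
      simpa using ((hasDerivAt_id y).mul_const (sin δ)).const_add (cos a * cos δ)
    refine (((hasDerivAt_T_eval_succ n _).comp y hlin).div_const _).congr_deriv ?_
    field_simp
  rw [intervalIntegral.integral_eq_sub_of_hasDerivAt (fun y _ => hF y)
    (Continuous.intervalIntegrable (by fun_prop) _ _)]
  have hT := fun θ => T_real_cos θ (n + 1)
  have hUδ := U_real_cos δ n
  push_cast at hT hUδ
  have hplus : cos a * cos δ + sin a * sin δ = cos (a - δ) := (cos_sub a δ).symm
  have hminus : cos a * cos δ + -sin a * sin δ = cos (a + δ) := by rw [cos_add]; ring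
  rw [hplus, hminus, hT, hT, div_sub_div_same, mul_sub, mul_add, cos_sub, cos_add, ← hUδ]
  field_simp
  ring

theorem integral_U_eval_chord (n : ℕ) (δ x : ℝ) :
    ∫ y in -√(1 - x ^ 2)..√(1 - x ^ 2), (U ℝ n).eval (x * cos δ + y * sin δ)
      = 2 / (n + 1) * √(1 - x ^ 2) * (U ℝ n).eval x * (U ℝ n).eval (cos δ) := by
  by_cases hx : x ∈ Set.Icc (-1) 1
  · obtain ⟨a, ha, rfl⟩ : ∃ a ∈ Set.Icc 0 π, cos a = x :=
      ⟨arccos x, ⟨arccos_nonneg x, arccos_le_pi x⟩, cos_arccos hx.1 hx.2⟩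
    have hU := U_real_cos a n
    push_cast at hU
    rw [← sin_sq, sqrt_sq (sin_nonneg_of_mem_Icc ha), integral_U_eval_chord_cos, ← hU]
    ring
  · have hr : √(1 - x ^ 2) = 0 := by
      rw [Set.mem_Icc, ← abs_le, not_le, ← one_lt_sq_iff_one_lt_abs] at hx
      exact sqrt_eq_zero_of_nonpos (by linarith)
    simp [hr]

theorem integral_U_eval_sq_mul_sqrt (n : ℕ) :
    ∫ x in -1..1, (U ℝ n).eval x ^ 2 * √(1 - x ^ 2) = π / 2 := by
  have hn : (n : ℝ) + 1 ≠ 0 := by positivity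
  have hsubst := intervalIntegral.integral_comp_mul_deriv (a := π) (b := 0)
    (f := cos) (f' := fun θ => -sin θ) (g := fun x => (U ℝ n).eval x ^ 2 * √(1 - x ^ 2))
    (fun θ _ => hasDerivAt_cos θ) (by fun_prop) (by fun_prop)
  rw [cos_pi, cos_zero] at hsubst
  rw [← hsubst, intervalIntegral.integral_symm, ← intervalIntegral.integral_neg]
  have hsq : Set.EqOn
      (fun θ => -(((fun x => (U ℝ n).eval x ^ 2 * √(1 - x ^ 2)) ∘ cos) θ * -sin θ))
      (fun θ => sin ((n + 1) * θ) ^ 2) (Set.uIcc 0 π) := by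
    intro θ hθ
    rw [Set.uIcc_of_le pi_pos.le] at hθ
    have hU := U_real_cos θ n
    push_cast at hU
    simp only [Function.comp_apply, ← sin_sq, sqrt_sq (sin_nonneg_of_mem_Icc hθ), ← hU]
    ring
  have hsin : sin ((n + 1) * π) = 0 := by exact_mod_cast sin_nat_mul_pi (n + 1)
  rw [intervalIntegral.integral_congr hsq, intervalIntegral.integral_comp_mul_left
    (fun θ => sin θ ^ 2) hn, integral_sin_sq, mul_zero, sin_zero, hsin, smul_eq_mul]
  field_simp
  ring

theorem Complex.mem_ball_zero_one_iff (x y : ℝ) :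
    (⟨x, y⟩ : ℂ) ∈ Metric.ball (0 : ℂ) 1 ↔ y ∈ Set.Ioo (-√(1 - x ^ 2)) √(1 - x ^ 2) := by
  rw [mem_ball_zero_iff, Complex.norm_def, Complex.normSq_mk, sqrt_lt' one_pos, Set.mem_Ioo,
    ← abs_lt, lt_sqrt (abs_nonneg y), sq_abs]
  constructor <;> intro h <;> nlinarith

theorem Complex.setIntegral_ball_zero_one {E : Type*} [NormedAddCommGroup E] [NormedSpace ℝ E]
    {f : ℂ → E} (hf : IntegrableOn f (Metric.ball 0 1)) :
    ∫ z in Metric.ball (0 : ℂ) 1, f z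
      = ∫ x in -1..1, ∫ y in -√(1 - x ^ 2)..√(1 - x ^ 2), f ⟨x, y⟩ := by
  have hball : MeasurableSet (Metric.ball (0 : ℂ) 1) := measurableSet_ball
  have hprod := Complex.volume_preserving_equiv_real_prod.symm
  rw [← integral_indicator hball, ← hprod.integral_comp
      Complex.measurableEquivRealProd.symm.measurableEmbedding,
    Measure.volume_eq_prod, integral_prod]
  · have hinner : ∀ x : ℝ, ∫ y, (Metric.ball (0 : ℂ) 1).indicator f
          (Complex.measurableEquivRealProd.symm (x, y))
        = ∫ y in -√(1 - x ^ 2)..√(1 - x ^ 2), f ⟨x, y⟩ := by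
      intro x
      rw [intervalIntegral.integral_of_le (neg_le_self (sqrt_nonneg _)),
        integral_Ioc_eq_integral_Ioo, ← integral_indicator measurableSet_Ioo]
      congr 1 with y
      classical
      simp only [Complex.measurableEquivRealProd_symm_apply, Set.indicator_apply,
        Complex.mem_ball_zero_one_iff]
    simp_rw [hinner]
    rw [intervalIntegral.integral_of_le (by norm_num)]
    refine (setIntegral_eq_integral_of_forall_compl_eq_zero fun x hx => ?_).symm
    have hr : √(1 - x ^ 2) = 0 := by
      rw [Set.mem_Ioc, not_and_or, not_lt, not_le] at hx
      exact sqrt_eq_zero_of_nonpos (by rcases hx with hx | hx <;> nlinarith)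
    rw [hr, neg_zero, intervalIntegral.integral_same]
  · rw [← Measure.volume_eq_prod]
    exact (hprod.integrable_comp_emb Complex.measurableEquivRealProd.symm.measurableEmbedding).2
      (hf.integrable_indicator hball)

theorem LinearIsometryEquiv.setIntegral_ball_zero_comp {E F G : Type*}
    [NormedAddCommGroup E] [InnerProductSpace ℝ E] [FiniteDimensional ℝ E]
    [MeasurableSpace E] [BorelSpace E]
    [NormedAddCommGroup F] [InnerProductSpace ℝ F] [FiniteDimensional ℝ F]
    [MeasurableSpace F] [BorelSpace F]
    [NormedAddCommGroup G] [NormedSpace ℝ G]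
    (L : E ≃ₗᵢ[ℝ] F) (f : F → G) (r : ℝ) :
    ∫ x in Metric.ball 0 r, f (L x) = ∫ y in Metric.ball 0 r, f y := by
  rw [← L.measurePreserving.setIntegral_preimage_emb L.toHomeomorph.measurableEmbedding,
    L.preimage_ball, map_zero]

theorem rotation_exp_re_mul_cos_add_im_mul_sin (α β : ℝ) (w : ℂ) :
    (rotation (Circle.exp α) w).re * cos β + (rotation (Circle.exp α) w).im * sin β
      = w.re * cos (β - α) + w.im * sin (β - α) := by
  simp only [rotation_apply, Circle.coe_exp, Complex.mul_re, Complex.mul_im,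
    Complex.exp_ofReal_mul_I_re, Complex.exp_ofReal_mul_I_im, cos_sub, sin_sub]
  ring

theorem integral_ball_U_eval_mul_U_eval (n : ℕ) (δ : ℝ) :
    ∫ z in Metric.ball (0 : ℂ) 1, (U ℝ n).eval z.re * (U ℝ n).eval (z.re * cos δ + z.im * sin δ)
      = π / (n + 1) * (U ℝ n).eval (cos δ) := by
  have hn : (n : ℝ) + 1 ≠ 0 := by positivity
  have hcont : Continuous fun z : ℂ =>
      (U ℝ n).eval z.re * (U ℝ n).eval (z.re * cos δ + z.im * sin δ) := by fun_prop
  rw [Complex.setIntegral_ball_zero_one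
    ((hcont.continuousOn.integrableOn_compact (isCompact_closedBall 0 1)).mono_set Metric.ball_subset_closedBall)]
  simp_rw [intervalIntegral.integral_const_mul, integral_U_eval_chord]
  have hfactor : ∀ x, (U ℝ n).eval x * (2 / (n + 1) * √(1 - x ^ 2) * (U ℝ n).eval x
      * (U ℝ n).eval (cos δ))
      = 2 / (n + 1) * (U ℝ n).eval (cos δ) * ((U ℝ n).eval x ^ 2 * √(1 - x ^ 2)) := by
    intro x; ring
  simp_rw [hfactor]
  rw [intervalIntegral.integral_const_mul, integral_U_eval_sq_mul_sqrt]
  field_simp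

/-- For each `n`, the ridge polynomials `φ̃_{n,k}`, `k = 0,…,n`, form an
orthonormal set in `L²(D)`, `D` the unit disk: `∫_D φ̃_{n,j} φ̃_{n,k} = δ_{jk}`. -/
theorem ridge_polynomials_orthonormal (n : ℕ) (j k : ℕ) (hj : j ≤ n) (hk : k ≤ n) :
    ∫ p in Metric.ball (0 : EuclideanSpace ℝ (Fin 2)) 1,
      ridgePoly n j p * ridgePoly n k p = if j = k then 1 else 0 := by
  set θ : ℕ → ℝ := fun i => i * (π / (n + 1)) with hθ
  let L : ℂ ≃ₗᵢ[ℝ] EuclideanSpace ℝ (Fin 2) :=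
    (rotation (Circle.exp (θ j))).trans Complex.orthonormalBasisOneI.repr
  have hL : ∀ i z, ridgePoly n i (L z)
      = (√π)⁻¹ * (U ℝ n).eval (z.re * cos (θ i - θ j) + z.im * sin (θ i - θ j)) := by
    intro i z
    rw [← rotation_exp_re_mul_cos_add_im_mul_sin]
    simp [ridgePoly, L, Complex.orthonormalBasisOneI_repr_apply, θ]
  rw [← L.setIntegral_ball_zero_comp]
  simp_rw [hL, sub_self, cos_zero, sin_zero, mul_one, mul_zero, add_zero, mul_mul_mul_comm]
  rw [integral_const_mul, integral_ball_U_eval_mul_U_eval, hθ,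
    U_eval_cos_mul_pi_div_sub n hj hk]
  have hπ : (√π)⁻¹ * (√π)⁻¹ = π⁻¹ := by rw [← mul_inv, mul_self_sqrt pi_pos.le]
  rw [hπ]
  split_ifs
  · field_simp
  · simp
end

section
/- Each ridge polynomial φ̃_{n,k}(x,y) = (1/√π) U_n(x cos(kh) + y sin(kh)) with h = π/(n+1) is orthogonal in L²(D) to every polynomial of total degree at most n−1. -/
/-!
Rotate the disk so that the direction `(cos (kh), sin (kh))` of the ridge becomes the first
coordinate axis: rotations preserve the disk, Lebesgue measure and total degree. Integrating a
monomial `x^a y^b` over the chord `|y| < √(1 - x²)` leaves `x^a r(x) √(1 - x²)` with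
`deg r ≤ b`, so everything reduces to the orthogonality of `U_n` to polynomials of degree `< n`
for the weight `√(1 - x²)`. Under `x = cos θ` this is
`∫₀^π sin((n+1)θ) sin θ cos^m θ dθ = 0` for `m < n`.
-/

open MeasureTheory Real

open Polynomial.Chebyshev
open scoped Polynomial InnerProductSpace

theorem integral_cos_nat_mul_mul_cos_pow_eq_zero {m N : ℕ} (h : m < N) :
    ∫ θ in 0..π, cos (N * θ) * cos θ ^ m = 0 := by
  induction m generalizing N with
  | zero =>
    have hN : (N : ℝ) ≠ 0 := by exact_mod_cast (by omega : N ≠ 0)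
    simp [intervalIntegral.integral_comp_mul_left (fun x => cos x) hN, sin_nat_mul_pi]
  | succ m ih =>
    obtain ⟨M, rfl⟩ : ∃ M, N = M + 1 := ⟨N - 1, by omega⟩
    have h_prod (θ : ℝ) : cos ((M + 1 : ℕ) * θ) * cos θ ^ (m + 1) =
        (cos ((M + 2 : ℕ) * θ) * cos θ ^ m + cos (M * θ) * cos θ ^ m) / 2 := by
      have h₁ : ((M + 2 : ℕ) : ℝ) * θ = (M + 1 : ℕ) * θ + θ := by push_cast; ring
      have h₂ : (M : ℝ) * θ = (M + 1 : ℕ) * θ - θ := by push_cast; ring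
      rw [h₁, h₂, cos_add, cos_sub]
      ring
    simp_rw [h_prod]
    rw [intervalIntegral.integral_div, intervalIntegral.integral_add, ih (by omega),
      ih (by omega)]
    · simp
    all_goals exact (by fun_prop : Continuous _).intervalIntegrable _ _

theorem integral_sin_mul_sin_mul_cos_pow_eq_zero {m n : ℕ} (h : m < n) :
    ∫ θ in 0..π, sin ((n + 1) * θ) * sin θ * cos θ ^ m = 0 := by
  have h_prod (θ : ℝ) : sin ((n + 1) * θ) * sin θ * cos θ ^ m =
      (cos (n * θ) * cos θ ^ m - cos ((n + 2 : ℕ) * θ) * cos θ ^ m) / 2 := by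
    have h₁ : ((n + 2 : ℕ) : ℝ) * θ = (n + 1) * θ + θ := by push_cast; ring
    have h₂ : (n : ℝ) * θ = (n + 1) * θ - θ := by ring
    rw [h₁, h₂, cos_add, cos_sub]
    ring
  simp_rw [h_prod]
  rw [intervalIntegral.integral_div, intervalIntegral.integral_sub,
    integral_cos_nat_mul_mul_cos_pow_eq_zero h, integral_cos_nat_mul_mul_cos_pow_eq_zero (by omega)]
  · simp
  all_goals exact (by fun_prop : Continuous _).intervalIntegrable _ _

theorem integral_eval_U_mul_eval_mul_sqrt_eq_zero {n : ℕ} {p : ℝ[X]} (hp : p.natDegree < n) :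
    ∫ x in -1..1, (U ℝ n).eval x * p.eval x * √(1 - x ^ 2) = 0 := by
  -- `x / √x = √x` holds for every real `x`, since `√` vanishes on `(-∞, 0]`.
  have h_weight (x : ℝ) : (U ℝ n).eval x * p.eval x * √(1 - x ^ 2) =
      (U ℝ n).eval x * p.eval x * (1 - x ^ 2) * √(1 - x ^ 2)⁻¹ := by
    rw [sqrt_inv, mul_assoc _ (1 - x ^ 2), ← div_eq_mul_inv, div_sqrt]
  have h_cos (θ : ℝ) : (U ℝ n).eval (cos θ) * p.eval (cos θ) * (1 - cos θ ^ 2) =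
      ∑ m ∈ Finset.range n, p.coeff m * (sin ((n + 1) * θ) * sin θ * cos θ ^ m) := by
    have hU : (U ℝ n).eval (cos θ) * sin θ = sin ((n + 1) * θ) := by
      exact_mod_cast U_real_cos θ n
    rw [Polynomial.eval_eq_sum_range' hp, ← sin_sq, ← hU, Finset.mul_sum, Finset.sum_mul]
    refine Finset.sum_congr rfl fun m _ => ?_
    ring
  simp_rw [h_weight]
  rw [← integral_measureT, integral_measureT_eq_integral_cos]
  simp_rw [h_cos]
  rw [intervalIntegral.integral_finsetSum]
  · refine Finset.sum_eq_zero fun m hm => ?_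
    rw [intervalIntegral.integral_const_mul,
      integral_sin_mul_sin_mul_cos_pow_eq_zero (Finset.mem_range.1 hm), mul_zero]
  · intro m _
    exact (by fun_prop : Continuous _).intervalIntegrable _ _

theorem exists_integral_pow_eq_eval_mul_sqrt_one_sub_sq (b : ℕ) : ∃ r : ℝ[X], r.natDegree ≤ b ∧
    ∀ x : ℝ, ∫ y in -√(1 - x ^ 2)..√(1 - x ^ 2), y ^ b = r.eval x * √(1 - x ^ 2) := by
  simp_rw [integral_pow]
  obtain ⟨j, rfl | rfl⟩ := Nat.even_or_odd' b
  · refine ⟨Polynomial.C (2 / (2 * j + 1) : ℝ) * (1 - Polynomial.X ^ 2 : ℝ[X]) ^ j, ?_, fun x => ?_⟩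
    · compute_degree
      omega
    have h_odd_pow : √(1 - x ^ 2) ^ (2 * j + 1) = (1 - x ^ 2) ^ j * √(1 - x ^ 2) := by
      rcases le_total 0 (1 - x ^ 2) with hx | hx
      · rw [pow_succ, pow_mul, sq_sqrt hx]
      · simp [sqrt_eq_zero'.2 hx]
    rw [(odd_two_mul_add_one j).neg_pow, h_odd_pow]
    simp only [sub_neg_eq_add, Nat.cast_mul, Nat.cast_ofNat, Polynomial.eval_mul,
      Polynomial.eval_C, Polynomial.eval_pow, Polynomial.eval_sub, Polynomial.eval_one,
      Polynomial.eval_X]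
    ring
  · refine ⟨0, by simp, fun x => ?_⟩
    rw [(by ring : 2 * j + 1 + 1 = 2 * (j + 1)), (even_two_mul _).neg_pow]
    simp

theorem setIntegral_unitDisk_eq_integral_integral {F : ℝ × ℝ → ℝ} (hF : Continuous F) :
    ∫ p in {p : ℝ × ℝ | p.1 ^ 2 + p.2 ^ 2 < 1}, F p =
      ∫ x in -1..1, ∫ y in -√(1 - x ^ 2)..√(1 - x ^ 2), F (x, y) := by
  set D := {p : ℝ × ℝ | p.1 ^ 2 + p.2 ^ 2 < 1}
  have hD : MeasurableSet D := (isOpen_lt (by fun_prop) continuous_const).measurableSet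
  have hFD : IntegrableOn F D := by
    refine (hF.continuousOn.integrableOn_compact (isCompact_closedBall 0 1)).mono_set
      fun p hp => ?_
    change p.1 ^ 2 + p.2 ^ 2 < 1 at hp
    rw [mem_closedBall_zero_iff, Prod.norm_def, max_le_iff, norm_eq_abs, norm_eq_abs,
      abs_le, abs_le]
    refine ⟨⟨?_, ?_⟩, ?_, ?_⟩ <;> nlinarith [sq_nonneg p.1, sq_nonneg p.2]
  -- For `|x| ≥ 1` both sides are false, the chord `√(1 - x ^ 2)` being `0`.
  have h_slice (x y : ℝ) : (x, y) ∈ D ↔ y ∈ Set.Ioo (-√(1 - x ^ 2)) √(1 - x ^ 2) := by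
    rw [Set.mem_Ioo, ← abs_lt, lt_sqrt (abs_nonneg y), sq_abs]
    change x ^ 2 + y ^ 2 < 1 ↔ _
    constructor <;> intro h <;> linarith
  have h_inner (x : ℝ) :
      ∫ y, D.indicator F (x, y) = ∫ y in -√(1 - x ^ 2)..√(1 - x ^ 2), F (x, y) := by
    rw [intervalIntegral.integral_of_le (neg_le_self (sqrt_nonneg _)),
      integral_Ioc_eq_integral_Ioo, ← MeasureTheory.integral_indicator measurableSet_Ioo]
    congr 1
    ext y
    simp only [Set.indicator, h_slice]
  have h_outer (x : ℝ) (hx : x ∉ Set.Icc (-1) 1) :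
      ∫ y in -√(1 - x ^ 2)..√(1 - x ^ 2), F (x, y) = 0 := by
    rw [Set.mem_Icc, ← abs_le, not_le, ← one_lt_sq_iff_one_lt_abs] at hx
    rw [sqrt_eq_zero'.2 (by linarith), neg_zero, intervalIntegral.integral_same]
  rw [← MeasureTheory.integral_indicator hD, Measure.volume_eq_prod,
    integral_prod _ ((integrable_indicator_iff hD).2 hFD)]
  simp_rw [h_inner]
  rw [intervalIntegral.integral_of_le (by norm_num), ← integral_Icc_eq_integral_Ioc,
    setIntegral_eq_integral_of_forall_compl_eq_zero h_outer]

theorem EuclideanSpace.setIntegral_ball_fin_two_eq (F : ℝ × ℝ → ℝ) :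
    ∫ p in Metric.ball (0 : EuclideanSpace ℝ (Fin 2)) 1, F (p 0, p 1) =
      ∫ p in {p : ℝ × ℝ | p.1 ^ 2 + p.2 ^ 2 < 1}, F p := by
  let φ := (MeasurableEquiv.toLp 2 (Fin 2 → ℝ)).symm.trans MeasurableEquiv.finTwoArrow
  have hφ : MeasurePreserving φ :=
    (volume_preserving_finTwoArrow ℝ).comp
      (EuclideanSpace.volume_preserving_symm_measurableEquiv_toLp _)
  have h_ball : φ ⁻¹' {p : ℝ × ℝ | p.1 ^ 2 + p.2 ^ 2 < 1} = Metric.ball 0 1 := by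
    ext p
    rw [mem_ball_zero_iff, ← sq_lt_one_iff₀ (norm_nonneg p), EuclideanSpace.norm_sq_eq,
      Fin.sum_univ_two, norm_eq_abs, norm_eq_abs, sq_abs, sq_abs]
    rfl
  rw [← hφ.setIntegral_preimage_emb φ.measurableEmbedding, h_ball]
  rfl

theorem setIntegral_ball_U_mul_monomial_eq_zero {n a b : ℕ} (h : a + b < n) :
    ∫ p in Metric.ball (0 : EuclideanSpace ℝ (Fin 2)) 1,
      (U ℝ n).eval (p 0) * (p 0 ^ a * p 1 ^ b) = 0 := by
  obtain ⟨r, hr, h_moment⟩ := exists_integral_pow_eq_eval_mul_sqrt_one_sub_sq b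
  have h_inner (x : ℝ) : ∫ y in -√(1 - x ^ 2)..√(1 - x ^ 2), (U ℝ n).eval x * (x ^ a * y ^ b) =
      (U ℝ n).eval x * (Polynomial.X ^ a * r).eval x * √(1 - x ^ 2) := by
    simp_rw [← mul_assoc, intervalIntegral.integral_const_mul, h_moment, Polynomial.eval_mul,
      Polynomial.eval_X_pow]
    ring
  rw [EuclideanSpace.setIntegral_ball_fin_two_eq fun p => (U ℝ n).eval p.1 * (p.1 ^ a * p.2 ^ b),
    setIntegral_unitDisk_eq_integral_integral (by fun_prop)]
  simp_rw [h_inner]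
  refine integral_eval_U_mul_eval_mul_sqrt_eq_zero ?_
  calc (Polynomial.X ^ a * r).natDegree ≤ a + b :=
        Polynomial.natDegree_mul_le.trans (by simpa using hr)
    _ < n := h

theorem setIntegral_ball_U_mul_eval_eq_zero {n : ℕ} {q : MvPolynomial (Fin 2) ℝ}
    (hq : q.totalDegree < n) :
    ∫ p in Metric.ball (0 : EuclideanSpace ℝ (Fin 2)) 1,
      (U ℝ n).eval (p 0) * MvPolynomial.eval (fun i => p i) q = 0 := by
  simp_rw [MvPolynomial.eval_eq', Fin.prod_univ_two, Finset.mul_sum,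
    mul_left_comm _ (MvPolynomial.coeff _ q)]
  rw [integral_finsetSum]
  · refine Finset.sum_eq_zero fun d hd => ?_
    have hd_deg : d 0 + d 1 < n := by
      have := MvPolynomial.le_totalDegree hd
      rw [Finsupp.sum_fintype _ _ (fun _ => rfl), Fin.sum_univ_two] at this
      omega
    rw [integral_const_mul, setIntegral_ball_U_mul_monomial_eq_zero hd_deg, mul_zero]
  · intro d _
    exact ((by fun_prop : Continuous _).continuousOn.integrableOn_compact
      (isCompact_closedBall 0 1)).mono_set Metric.ball_subset_closedBall

namespace MvPolynomial

variable {R σ τ : Type*} [CommSemiring R]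

theorem totalDegree_bind₁_le {g : σ → MvPolynomial τ R} (hg : ∀ i, (g i).totalDegree ≤ 1)
    (q : MvPolynomial σ R) : (bind₁ g q).totalDegree ≤ q.totalDegree := by
  conv_lhs => rw [q.as_sum, map_sum]
  refine totalDegree_finsetSum_le fun d hd => ?_
  rw [bind₁_monomial]
  calc (C (coeff d q) * ∏ i ∈ d.support, g i ^ d i).totalDegree
      ≤ ∑ i ∈ d.support, (g i ^ d i).totalDegree :=
        (totalDegree_mul _ _).trans <| by
          rw [totalDegree_C, zero_add]
          exact totalDegree_finsetProd _ _
    _ ≤ ∑ i ∈ d.support, d i := Finset.sum_le_sum fun i _ =>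
        (totalDegree_pow _ _).trans (by simpa using Nat.mul_le_mul_left (d i) (hg i))
    _ ≤ q.totalDegree := le_totalDegree hd

theorem exists_totalDegree_le_eval_eq_eval_linearMap [Fintype τ] (L : (τ → R) →ₗ[R] σ → R)
    (q : MvPolynomial σ R) :
    ∃ q' : MvPolynomial τ R, q'.totalDegree ≤ q.totalDegree ∧ ∀ x, eval x q' = eval (L x) q := by
  classical
  let g (i : σ) : MvPolynomial τ R := ∑ j, monomial (Finsupp.single j 1) (L (Pi.single j 1) i)
  have hg_deg (i : σ) : (g i).totalDegree ≤ 1 :=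
    totalDegree_finsetSum_le fun j _ => (totalDegree_monomial_le _ _).trans (by simp)
  have hg_eval (x : τ → R) (i : σ) : eval x (g i) = L x i := by
    have h_single (j : τ) : (Pi.single j 1 : τ → R) = fun k => if j = k then 1 else 0 := by
      ext k
      simp [Pi.single_apply, eq_comm]
    simp [g, h_single, LinearMap.pi_apply_eq_sum_univ L x, eval_monomial, mul_comm]
  refine ⟨bind₁ g q, totalDegree_bind₁_le hg_deg q, fun x => ?_⟩
  have h_comp : (eval x).comp C = RingHom.id R := RingHom.ext fun r => eval_C r
  simp only [hom_bind₁, hg_eval, h_comp]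
  rfl

end MvPolynomial

theorem exists_linearIsometryEquiv_inner_apply_eq {ι E : Type*} [Fintype ι]
    [NormedAddCommGroup E] [InnerProductSpace ℝ E] [FiniteDimensional ℝ E]
    (hι : Module.finrank ℝ E = Fintype.card ι) {ω : E} (hω : ‖ω‖ = 1) (i₀ : ι) :
    ∃ e : EuclideanSpace ℝ ι ≃ₗᵢ[ℝ] E, ∀ u, ⟪ω, e u⟫_ℝ = u i₀ := by
  have hω_orth : Orthonormal ℝ (({i₀} : Set ι).domRestrict fun _ => ω) :=
    ⟨fun _ => hω, fun i j hij => absurd (Subsingleton.elim i j) hij⟩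
  obtain ⟨b, hb⟩ := hω_orth.exists_orthonormalBasis_extension_of_card_eq hι
  refine ⟨b.repr.symm, fun u => ?_⟩
  rw [← hb i₀ rfl, ← b.repr_apply_apply, LinearIsometryEquiv.apply_symm_apply]

theorem setIntegral_ball_U_inner_mul_eval_eq_zero {n : ℕ} {ω : EuclideanSpace ℝ (Fin 2)}
    (hω : ‖ω‖ = 1) {q : MvPolynomial (Fin 2) ℝ} (hq : q.totalDegree < n) :
    ∫ p in Metric.ball (0 : EuclideanSpace ℝ (Fin 2)) 1,
      (U ℝ n).eval ⟪ω, p⟫_ℝ * MvPolynomial.eval (fun i => p i) q = 0 := by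
  obtain ⟨e, he⟩ := exists_linearIsometryEquiv_inner_apply_eq (by simp) hω (0 : Fin 2)
  obtain ⟨q', hq'_deg, hq'_eval⟩ := MvPolynomial.exists_totalDegree_le_eval_eq_eval_linearMap
    ((WithLp.linearEquiv 2 ℝ (Fin 2 → ℝ)).toLinearMap ∘ₗ e.toLinearMap ∘ₗ
      (WithLp.linearEquiv 2 ℝ (Fin 2 → ℝ)).symm.toLinearMap) q
  have h_rotate := e.measurePreserving.setIntegral_preimage_emb
    e.toMeasurableEquiv.measurableEmbedding
    (fun p => (U ℝ n).eval ⟪ω, p⟫_ℝ * MvPolynomial.eval (fun i => p i) q) (Metric.ball 0 1)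
  rw [LinearIsometryEquiv.preimage_ball, map_zero] at h_rotate
  rw [← h_rotate, ← setIntegral_ball_U_mul_eval_eq_zero (hq'_deg.trans_lt hq)]
  refine setIntegral_congr_fun measurableSet_ball fun u _ => ?_
  simp [he, hq'_eval]

theorem ridge_polynomial_orthogonal_lower_degree_general (n : ℕ) (k : ℕ)
    (q : MvPolynomial (Fin 2) ℝ) (hq : q.totalDegree + 1 ≤ n) :
    ∫ p in Metric.ball (0 : EuclideanSpace ℝ (Fin 2)) 1,
      ridgePoly n k p * MvPolynomial.eval (fun i => p i) q = 0 := by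
  let θ : ℝ := k * (π / (n + 1))
  let ω : EuclideanSpace ℝ (Fin 2) := !₂[cos θ, sin θ]
  have hω : ‖ω‖ = 1 := by
    simp [ω, EuclideanSpace.norm_eq, Fin.sum_univ_two]
  have h_ridge (p : EuclideanSpace ℝ (Fin 2)) :
      ridgePoly n k p = 1 / √π * (U ℝ n).eval ⟪ω, p⟫_ℝ := by
    simp [ridgePoly, ω, θ, PiLp.inner_apply, Fin.sum_univ_two, mul_comm]
  simp_rw [h_ridge, mul_assoc]
  rw [integral_const_mul, setIntegral_ball_U_inner_mul_eval_eq_zero hω (by omega), mul_zero]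

/-- Each ridge polynomial `φ̃_{n,k}` is orthogonal in `L²(D)` to every
polynomial of total degree at most `n − 1`. -/
theorem ridge_polynomial_orthogonal_lower_degree (n : ℕ) (k : ℕ) (hk : k ≤ n)
    (q : MvPolynomial (Fin 2) ℝ) (hq : q.totalDegree + 1 ≤ n) :
    ∫ p in Metric.ball (0 : EuclideanSpace ℝ (Fin 2)) 1,
      ridgePoly n k p * MvPolynomial.eval (fun i => p i) q = 0 :=
  ridge_polynomial_orthogonal_lower_degree_general n k q hq
end

section
/- The quadrature rule ∫_D g(x,y) dx dy ≈ Σ_{l=0}^{q} Σ_{m=0}^{2q} g(r_l cos(2πm/(2q+1)), r_l sin(2πm/(2q+1))) ω_l r_l · 2π/(2q+1), combining the (q+1)-point Gauss–Legendre rule on [0,1] (nodes r_l, weights ω_l satisfying ∫₀¹ p = Σ_l ω_l p(r_l) for deg p ≤ 2q+1) in the radial variable with the (2q+1)-point trapezoidal rule in the angle, is exact for all polynomials g of total degree at most 2q on the unit disk D. -/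
/-!
In polar coordinates the monomial `x ^ a * y ^ b` becomes `ρ ^ a * ρ ^ b * cos θ ^ a * sin θ ^ b`,
and with the Jacobian `ρ` its integral over the disk factors into `∫₀¹ ρ ^ (a + b + 1)`, which the
Gauss–Legendre rule integrates exactly when `a + b ≤ 2q`, and `∫ cos θ ^ a * sin θ ^ b` over a
period. The latter is a trigonometric polynomial of degree `a + b`. The `N`-point trapezoidal rule
is exact on `e^{inθ}` whenever `|n| < N`: its values at the nodes are the powers of the root of
unity `ζ ^ n ≠ 1`, which sum to zero.
-/

open MeasureTheory Real Set Metric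

open Complex in
noncomputable def trigMonomial (n : ℤ) (θ : ℝ) : ℂ := exp (n * θ * I)

@[simp]
theorem trigMonomial_zero : trigMonomial 0 = 1 := by
  ext θ
  simp [trigMonomial]

theorem continuous_trigMonomial (n : ℤ) : Continuous (trigMonomial n) := by
  unfold trigMonomial
  fun_prop

theorem trigMonomial_mul (m n : ℤ) : trigMonomial m * trigMonomial n = trigMonomial (m + n) := by
  ext θ
  simp only [trigMonomial, Pi.mul_apply, ← Complex.exp_add]
  push_cast
  ring_nf

def trigPolyDegreeLE (N : ℕ) : Submodule ℂ (ℝ → ℂ) :=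
  Submodule.span ℂ (trigMonomial '' {n | n.natAbs ≤ N})

namespace trigPolyDegreeLE

theorem trigMonomial_mem {N : ℕ} {n : ℤ} (hn : n.natAbs ≤ N) :
    trigMonomial n ∈ trigPolyDegreeLE N :=
  Submodule.subset_span ⟨n, hn, rfl⟩

theorem mul_le (a b : ℕ) :
    trigPolyDegreeLE a * trigPolyDegreeLE b ≤ trigPolyDegreeLE (a + b) := by
  rw [trigPolyDegreeLE, trigPolyDegreeLE, Submodule.span_mul_span, Submodule.span_le]
  rintro _ ⟨_, ⟨m, hm, rfl⟩, _, ⟨n, hn, rfl⟩, rfl⟩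
  simp only [Set.mem_ofPred_eq] at hm hn
  show trigMonomial m * trigMonomial n ∈ _
  rw [trigMonomial_mul]
  exact trigMonomial_mem (by omega)

theorem mul_mem {a b : ℕ} {f g : ℝ → ℂ} (hf : f ∈ trigPolyDegreeLE a)
    (hg : g ∈ trigPolyDegreeLE b) : f * g ∈ trigPolyDegreeLE (a + b) :=
  mul_le a b (Submodule.mul_mem_mul hf hg)

theorem pow_mem {a : ℕ} {f : ℝ → ℂ} (hf : f ∈ trigPolyDegreeLE a) (k : ℕ) :
    f ^ k ∈ trigPolyDegreeLE (k * a) := by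
  induction k with
  | zero =>
    rw [pow_zero, zero_mul, ← trigMonomial_zero]
    exact trigMonomial_mem le_rfl
  | succ k ih =>
    rw [pow_succ, add_one_mul]
    exact mul_mem ih hf

theorem ofReal_cos_mem : (fun θ : ℝ => (cos θ : ℂ)) ∈ trigPolyDegreeLE 1 := by
  have h : (fun θ : ℝ => (cos θ : ℂ)) =
      (2⁻¹ : ℂ) • trigMonomial 1 + (2⁻¹ : ℂ) • trigMonomial (-1) := by
    ext θ
    simp only [Pi.add_apply, Pi.smul_apply, smul_eq_mul, trigMonomial, Complex.ofReal_cos,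
      Complex.cos]
    push_cast
    ring_nf
  rw [h]
  exact add_mem (Submodule.smul_mem _ _ (trigMonomial_mem le_rfl))
    (Submodule.smul_mem _ _ (trigMonomial_mem le_rfl))

theorem ofReal_sin_mem : (fun θ : ℝ => (sin θ : ℂ)) ∈ trigPolyDegreeLE 1 := by
  have h : (fun θ : ℝ => (sin θ : ℂ)) =
      (-Complex.I / 2) • trigMonomial 1 + (Complex.I / 2) • trigMonomial (-1) := by
    ext θ
    simp only [Pi.add_apply, Pi.smul_apply, smul_eq_mul, trigMonomial, Complex.ofReal_sin,
      Complex.sin]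
    push_cast
    ring_nf
  rw [h]
  exact add_mem (Submodule.smul_mem _ _ (trigMonomial_mem le_rfl))
    (Submodule.smul_mem _ _ (trigMonomial_mem le_rfl))

theorem cos_pow_mul_sin_pow_mem (a b : ℕ) :
    (fun θ : ℝ => (cos θ : ℂ) ^ a * (sin θ : ℂ) ^ b) ∈ trigPolyDegreeLE (a + b) := by
  have h := mul_mem (pow_mem ofReal_cos_mem a) (pow_mem ofReal_sin_mem b)
  rw [mul_one, mul_one] at h
  exact h

end trigPolyDegreeLE

theorem integral_trigMonomial (n : ℤ) :
    ∫ θ in -π..π, trigMonomial n θ = if n = 0 then (2 * π : ℂ) else 0 := by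
  split_ifs with hn
  · simp [hn, two_mul]
  have hnI : (n : ℂ) * Complex.I ≠ 0 := by simp [hn]
  have hperiodic : Complex.exp (n * Complex.I * π) = Complex.exp (n * Complex.I * (-π : ℝ)) := by
    rw [show (n : ℂ) * Complex.I * π = n * Complex.I * (-π : ℝ) + n * (2 * π * Complex.I) by
      push_cast; ring, Complex.exp_add, Complex.exp_int_mul_two_pi_mul_I, mul_one]
  simp only [trigMonomial, mul_right_comm _ _ Complex.I]
  rw [integral_exp_mul_complex hnI, hperiodic, sub_self, zero_div]

theorem sum_trigMonomial_eq_zero {N : ℕ} {n : ℤ} (hn : n ≠ 0) (hnN : n.natAbs < N) :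
    ∑ m : Fin N, trigMonomial n (2 * π * m / N) = 0 := by
  set ζ := Complex.exp (2 * π * Complex.I / N)
  have hζ : IsPrimitiveRoot ζ N := Complex.isPrimitiveRoot_exp N (by omega)
  have hnode : ∀ m : ℕ, trigMonomial n (2 * π * m / N) = (ζ ^ n) ^ m := by
    intro m
    rw [← Complex.exp_int_mul, ← Complex.exp_nat_mul, trigMonomial]
    congr 1
    push_cast
    ring
  have hζn : ζ ^ n ≠ 1 := by
    rw [Ne, hζ.zpow_eq_one_iff_dvd]
    exact fun hdvd => hn (Int.eq_zero_of_dvd_of_natAbs_lt_natAbs hdvd (by simpa using hnN))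
  have hζnN : (ζ ^ n) ^ N = 1 := by
    rw [← zpow_natCast, ← zpow_mul, mul_comm, zpow_mul, zpow_natCast, hζ.pow_eq_one, one_zpow]
  simp only [hnode]
  rw [Fin.sum_univ_eq_sum_range (fun m => (ζ ^ n) ^ m), geom_sum_eq hζn, hζnN, sub_self,
    zero_div]

theorem integral_eq_trapezoid_of_mem_trigPolyDegreeLE {M N : ℕ} (hMN : M < N) {f : ℝ → ℂ}
    (hf : f ∈ trigPolyDegreeLE M) :
    ∫ θ in -π..π, f θ = 2 * π / N * ∑ m : Fin N, f (2 * π * m / N) := by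
  suffices Continuous f ∧ ∫ θ in -π..π, f θ = 2 * π / N * ∑ m : Fin N, f (2 * π * m / N) from
    this.2
  induction hf using Submodule.span_induction with
  | mem f hf =>
    obtain ⟨n, hn, rfl⟩ := hf
    refine ⟨continuous_trigMonomial n, ?_⟩
    rw [integral_trigMonomial]
    split_ifs with hn0
    · have hN : (N : ℂ) ≠ 0 := by exact_mod_cast (show N ≠ 0 by omega)
      simp [hn0, hN]
    · simp only [Set.mem_ofPred_eq] at hn
      rw [sum_trigMonomial_eq_zero hn0 (by omega), mul_zero]
  | zero => exact ⟨continuous_zero, by simp⟩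
  | add f g _ _ hf hg =>
    refine ⟨hf.1.add hg.1, ?_⟩
    simp only [Pi.add_apply, Finset.sum_add_distrib, mul_add]
    rw [intervalIntegral.integral_add (hf.1.intervalIntegrable _ _) (hg.1.intervalIntegrable _ _),
      hf.2, hg.2]
  | smul c f _ hf =>
    refine ⟨hf.1.const_smul c, ?_⟩
    simp only [Pi.smul_apply, smul_eq_mul, intervalIntegral.integral_const_mul, hf.2,
      ← Finset.mul_sum]
    ring

theorem integral_cos_pow_mul_sin_pow_eq_trapezoid {a b N : ℕ} (hN : a + b < N) :
    ∫ θ in -π..π, cos θ ^ a * sin θ ^ b =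
      2 * π / N * ∑ m : Fin N, cos (2 * π * m / N) ^ a * sin (2 * π * m / N) ^ b := by
  apply Complex.ofReal_injective
  push_cast [← intervalIntegral.integral_ofReal]
  simpa using integral_eq_trapezoid_of_mem_trigPolyDegreeLE hN
    (trigPolyDegreeLE.cos_pow_mul_sin_pow_mem a b)

theorem Complex.setIntegral_ball_eq_polar {E : Type*} [NormedAddCommGroup E] [NormedSpace ℝ E]
    (G : ℂ → E) (R : ℝ) :
    ∫ z in ball (0 : ℂ) R, G z =
      ∫ p in Ioo 0 R ×ˢ Ioo (-π) π, p.1 • G (Complex.polarCoord.symm p) := by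
  have htarget : polarCoord.target ∩ (fun p : ℝ × ℝ => p.1) ⁻¹' Iio R =
      Ioo 0 R ×ˢ Ioo (-π) π := by
    ext p
    simp only [polarCoord_target, mem_inter_iff, mem_prod, mem_preimage, mem_Ioi, mem_Iio,
      mem_Ioo]
    tauto
  rw [← integral_indicator measurableSet_ball, ← Complex.integral_comp_polarCoord_symm,
    ← htarget, ← setIntegral_indicator (measurable_fst measurableSet_Iio)]
  refine setIntegral_congr_fun polarCoord.open_target.measurableSet fun p hp => ?_
  have hp1 : 0 < p.1 := (polarCoord_target ▸ hp).1
  simp only [indicator, mem_ball, dist_zero_right, Complex.norm_polarCoord_symm, abs_of_pos hp1,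
    mem_preimage, mem_Iio]
  split_ifs <;> simp

theorem setIntegral_ball_euclideanSpace_eq_complex {E : Type*} [NormedAddCommGroup E]
    [NormedSpace ℝ E] (F : ℝ → ℝ → E) (R : ℝ) :
    ∫ p in ball (0 : EuclideanSpace ℝ (Fin 2)) R, F (p 0) (p 1) =
      ∫ z in ball (0 : ℂ) R, F z.re z.im := by
  rw [← Complex.orthonormalBasisOneI.repr.measurePreserving.setIntegral_preimage_emb
    Complex.orthonormalBasisOneI.repr.toHomeomorph.measurableEmbedding,
    LinearIsometryEquiv.preimage_ball, map_zero]
  simp [Complex.orthonormalBasisOneI_repr_apply]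

theorem setIntegral_unitBall_pow_mul_pow (a b : ℕ) :
    ∫ p in ball (0 : EuclideanSpace ℝ (Fin 2)) 1, p 0 ^ a * p 1 ^ b =
      (∫ ρ in 0..1, ρ ^ (a + b + 1)) * ∫ θ in -π..π, cos θ ^ a * sin θ ^ b := by
  have hpolar : ∀ p : ℝ × ℝ, p.1 • ((Complex.polarCoord.symm p).re ^ a *
      (Complex.polarCoord.symm p).im ^ b) = p.1 ^ (a + b + 1) * (cos p.2 ^ a * sin p.2 ^ b) := by
    intro p
    simp only [Complex.polarCoord_symm_apply, Complex.re_ofReal_mul, Complex.im_ofReal_mul,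
      Complex.add_re, Complex.add_im, Complex.ofReal_re, Complex.ofReal_im, Complex.mul_I_re,
      Complex.mul_I_im, smul_eq_mul]
    ring
  rw [setIntegral_ball_euclideanSpace_eq_complex (fun x y => x ^ a * y ^ b),
    Complex.setIntegral_ball_eq_polar]
  simp only [hpolar]
  rw [Measure.volume_eq_prod, setIntegral_prod_mul (fun ρ : ℝ => ρ ^ (a + b + 1))
      (fun θ : ℝ => cos θ ^ a * sin θ ^ b), intervalIntegral.integral_of_le zero_le_one,
    intervalIntegral.integral_of_le (by linarith [pi_pos]), integral_Ioc_eq_integral_Ioo,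
    integral_Ioc_eq_integral_Ioo]

theorem setIntegral_unitBall_pow_mul_pow_eq_productRule {ι : Type*} [Fintype ι] (r ω : ι → ℝ)
    {a b N : ℕ} (hrad : ∫ ρ in 0..1, ρ ^ (a + b + 1) = ∑ l, ω l * r l ^ (a + b + 1))
    (hN : a + b < N) :
    ∫ p in ball (0 : EuclideanSpace ℝ (Fin 2)) 1, p 0 ^ a * p 1 ^ b =
      ∑ l, ∑ m : Fin N, (r l * cos (2 * π * m / N)) ^ a * (r l * sin (2 * π * m / N)) ^ b *
        ω l * (2 * π / N) * r l := by
  rw [setIntegral_unitBall_pow_mul_pow, hrad, integral_cos_pow_mul_sin_pow_eq_trapezoid hN,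
    Finset.sum_mul]
  refine Finset.sum_congr rfl fun l _ => ?_
  rw [Finset.mul_sum, Finset.mul_sum]
  refine Finset.sum_congr rfl fun m _ => ?_
  ring

theorem integrableOn_unitBall_pow_mul_pow (a b : ℕ) :
    IntegrableOn (fun p : EuclideanSpace ℝ (Fin 2) => p 0 ^ a * p 1 ^ b) (ball 0 1) := by
  have hc : Continuous (fun p : EuclideanSpace ℝ (Fin 2) => p 0 ^ a * p 1 ^ b) := by fun_prop
  exact (hc.continuousOn.integrableOn_compact (isCompact_closedBall 0 1)).mono_set
    ball_subset_closedBall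

theorem MvPolynomial.eval_fin_two {R : Type*} [CommSemiring R] (g : MvPolynomial (Fin 2) R)
    (x : Fin 2 → R) : eval x g = ∑ d ∈ g.support, g.coeff d * (x 0 ^ d 0 * x 1 ^ d 1) := by
  simp only [eval_eq', Fin.prod_univ_two]

theorem MvPolynomial.add_le_totalDegree_of_mem_support {R : Type*} [CommSemiring R]
    {g : MvPolynomial (Fin 2) R} {d : Fin 2 →₀ ℕ} (hd : d ∈ g.support) :
    d 0 + d 1 ≤ g.totalDegree := by
  simpa [Finsupp.sum_fintype, Fin.sum_univ_two] using le_totalDegree hd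

/-- The quadrature rule on the unit disk obtained by combining the
`(q+1)`-point Gauss–Legendre rule on `[0,1]` (radially, with weight `r`) and the
`(2q+1)`-point trapezoidal rule in the angle is exact for all polynomials of total
degree at most `2q`. -/
theorem disk_quadrature_exactness (q : ℕ) (r ω : Fin (q + 1) → ℝ)
    (hGL : ∀ p : Polynomial ℝ, p.natDegree ≤ 2 * q + 1 →
      ∫ x in (0:ℝ)..1, p.eval x = ∑ l, ω l * p.eval (r l))
    (g : MvPolynomial (Fin 2) ℝ) (hg : g.totalDegree ≤ 2 * q) :
    ∫ p in Metric.ball (0 : EuclideanSpace ℝ (Fin 2)) 1,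
        MvPolynomial.eval (fun i => p i) g =
      ∑ l : Fin (q + 1), ∑ m : Fin (2 * q + 1),
        MvPolynomial.eval
          ![r l * Real.cos (2 * π * m / (2 * q + 1)),
            r l * Real.sin (2 * π * m / (2 * q + 1))] g *
          ω l * (2 * π / (2 * q + 1)) * r l := by
  have hmonomial : ∀ d ∈ g.support, ∫ p in ball (0 : EuclideanSpace ℝ (Fin 2)) 1,
      p 0 ^ d 0 * p 1 ^ d 1 = ∑ l : Fin (q + 1), ∑ m : Fin (2 * q + 1),
        (r l * cos (2 * π * m / (2 * q + 1))) ^ d 0 *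
          (r l * sin (2 * π * m / (2 * q + 1))) ^ d 1 * ω l * (2 * π / (2 * q + 1)) * r l := by
    intro d hd
    have hdeg := (MvPolynomial.add_le_totalDegree_of_mem_support hd).trans hg
    have hrad := hGL (Polynomial.X ^ (d 0 + d 1 + 1)) (by rw [Polynomial.natDegree_X_pow]; omega)
    simp only [Polynomial.eval_pow, Polynomial.eval_X] at hrad
    simpa using setIntegral_unitBall_pow_mul_pow_eq_productRule r ω hrad (N := 2 * q + 1)
      (by omega)
  simp only [MvPolynomial.eval_fin_two, Matrix.cons_val_zero, Matrix.cons_val_one, Finset.sum_mul]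
  rw [integral_finsetSum _ fun d _ => (integrableOn_unitBall_pow_mul_pow _ _).const_mul _]
  conv_rhs => rw [Finset.sum_congr rfl fun l _ => Finset.sum_comm, Finset.sum_comm]
  refine Finset.sum_congr rfl fun d hd => ?_
  rw [integral_const_mul, hmonomial d hd, Finset.mul_sum]
  refine Finset.sum_congr rfl fun l _ => ?_
  rw [Finset.mul_sum]
  refine Finset.sum_congr rfl fun m _ => ?_
  ring
end
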